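/- Consider the planar Hamiltonian flow of F(x₁,x₂) = x₁²/2 + x₁⁴/4 + x₂²/2. The period T(h) of the closed orbit of energy h > 0 is T(h) = 4K(k)√(1-2k²) where k ∈ (0, 1/√2) is determined by h = k²(1-k²)/(1-2k²)², and T(h) is a strictly decreasing continuous function of h on (0,∞) with T(h) → 2π as h → 0⁺. -/
import Mathlib


open Real Filter


/-- auxiliary: strict monotonicity of the energy function `k ↦ k²(1-k²)/(1-2k²)²`. -/
lemma duffing_fmono {a b : ℝ} (ha : 0 ≤ a) (hab : a < b) (hb : b ^ 2 < 1 / 2) :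
    a ^ 2 * (1 - a ^ 2) / (1 - 2 * a ^ 2) ^ 2
      < b ^ 2 * (1 - b ^ 2) / (1 - 2 * b ^ 2) ^ 2 := by
  have hab2 : a ^ 2 < b ^ 2 := by nlinarith
  have ha2 : a ^ 2 < 1 / 2 := lt_trans hab2 hb
  have da : (0:ℝ) < (1 - 2 * a ^ 2) ^ 2 := by nlinarith
  have db : (0:ℝ) < (1 - 2 * b ^ 2) ^ 2 := by nlinarith
  rw [div_lt_div_iff₀ da db]
  nlinarith [mul_pos (sub_pos.2 hab2) (show (0:ℝ) < 1 - a ^ 2 - b ^ 2 by nlinarith)]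

/-- auxiliary: regularized complete elliptic integral. -/
noncomputable def duffingG (k : ℝ) : ℝ :=
  ∫ θ in (0:ℝ)..(Real.pi / 2), 1 / Real.sqrt (1 - min (k ^ 2) 2⁻¹ * Real.sin θ ^ 2)

lemma duffing_den_pos (m : ℝ) (θ : ℝ) :
    0 < 1 - min (m ^ 2) 2⁻¹ * Real.sin θ ^ 2 := by
  have h1 : min (m ^ 2) 2⁻¹ ≤ 2⁻¹ := min_le_right _ _
  have h2 : 0 ≤ min (m ^ 2) 2⁻¹ := le_min (sq_nonneg m) (by norm_num)
  have h3 : Real.sin θ ^ 2 ≤ 1 := Real.sin_sq_le_one θ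
  nlinarith [sq_nonneg (Real.sin θ)]

lemma duffingG_cont : Continuous duffingG := by
  have : Continuous (Function.uncurry fun (k θ : ℝ) =>
      1 / Real.sqrt (1 - min (k ^ 2) 2⁻¹ * Real.sin θ ^ 2)) := by
    apply Continuous.div continuous_const
    · fun_prop
    · intro p
      exact (Real.sqrt_pos.2 (duffing_den_pos p.1 p.2)).ne'
  exact intervalIntegral.continuous_parametric_intervalIntegral_of_continuous' this 0 (Real.pi/2)

lemma duffingG_integrand_cont (k : ℝ) :
    Continuous fun θ : ℝ => 1 / Real.sqrt (1 - min (k ^ 2) 2⁻¹ * Real.sin θ ^ 2) := by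
  apply Continuous.div continuous_const
  · fun_prop
  · intro θ
    exact (Real.sqrt_pos.2 (duffing_den_pos k θ)).ne'

lemma duffingG_zero : duffingG 0 = Real.pi / 2 := by
  have : ∀ θ : ℝ, 1 / Real.sqrt (1 - min ((0:ℝ) ^ 2) 2⁻¹ * Real.sin θ ^ 2) = 1 := by
    intro θ; norm_num
  simp only [duffingG, this, intervalIntegral.integral_const, smul_eq_mul, mul_one]
  ring

/-- pulled-in form of `4 G(k) √(1-2k²)`. -/
lemma duffing_pull (k : ℝ) :
    4 * duffingG k * Real.sqrt (1 - 2 * k ^ 2)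
      = ∫ θ in (0:ℝ)..(Real.pi / 2),
          4 * Real.sqrt (1 - 2 * k ^ 2) *
            (1 / Real.sqrt (1 - min (k ^ 2) 2⁻¹ * Real.sin θ ^ 2)) := by
  rw [intervalIntegral.integral_const_mul, duffingG]; ring

lemma duffing_gmono {a b : ℝ} (ha : 0 ≤ a) (hab : a < b) (hb : b ^ 2 < 1 / 2) :
    4 * duffingG b * Real.sqrt (1 - 2 * b ^ 2)
      < 4 * duffingG a * Real.sqrt (1 - 2 * a ^ 2) := by
  have hab2 : a ^ 2 < b ^ 2 := by nlinarith
  have ha2 : a ^ 2 < 1 / 2 := lt_trans hab2 hb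
  have hma : min (a ^ 2) 2⁻¹ = a ^ 2 := min_eq_left (by linarith)
  have hmb : min (b ^ 2) 2⁻¹ = b ^ 2 := min_eq_left (by linarith)
  rw [duffing_pull, duffing_pull]
  set fa := fun θ : ℝ => 4 * Real.sqrt (1 - 2 * a ^ 2) *
      (1 / Real.sqrt (1 - min (a ^ 2) 2⁻¹ * Real.sin θ ^ 2)) with hfa
  set fb := fun θ : ℝ => 4 * Real.sqrt (1 - 2 * b ^ 2) *
      (1 / Real.sqrt (1 - min (b ^ 2) 2⁻¹ * Real.sin θ ^ 2)) with hfb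
  have hca : Continuous fa := continuous_const.mul (duffingG_integrand_cont a)
  have hcb : Continuous fb := continuous_const.mul (duffingG_integrand_cont b)
  have hpos : ∀ θ : ℝ, 0 < fa θ - fb θ := by
    intro θ
    have dbp : 0 < Real.sqrt (1 - min (b ^ 2) 2⁻¹ * Real.sin θ ^ 2) :=
      Real.sqrt_pos.2 (duffing_den_pos b θ)
    have dap : 0 < Real.sqrt (1 - min (a ^ 2) 2⁻¹ * Real.sin θ ^ 2) :=
      Real.sqrt_pos.2 (duffing_den_pos a θ)
    have hs : Real.sin θ ^ 2 ≤ 1 := Real.sin_sq_le_one θ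
    have key : (1 - 2 * b ^ 2) * (1 - a ^ 2 * Real.sin θ ^ 2)
        < (1 - 2 * a ^ 2) * (1 - b ^ 2 * Real.sin θ ^ 2) := by
      nlinarith [mul_pos (sub_pos.2 hab2) (show (0:ℝ) < 2 - Real.sin θ ^ 2 by nlinarith)]
    have pb : (0:ℝ) < 1 - 2 * b ^ 2 := by nlinarith
    have pa1 : (0:ℝ) < 1 - a ^ 2 * Real.sin θ ^ 2 := by
      nlinarith [sq_nonneg (Real.sin θ), sq_nonneg a]
    have h1 : Real.sqrt (1 - 2 * b ^ 2) * Real.sqrt (1 - min (a ^ 2) 2⁻¹ * Real.sin θ ^ 2)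
        < Real.sqrt (1 - 2 * a ^ 2) * Real.sqrt (1 - min (b ^ 2) 2⁻¹ * Real.sin θ ^ 2) := by
      rw [hma, hmb, ← Real.sqrt_mul (by nlinarith), ← Real.sqrt_mul (by nlinarith)]
      exact Real.sqrt_lt_sqrt (mul_pos pb pa1).le key
    have : 4 * Real.sqrt (1 - 2 * b ^ 2) / Real.sqrt (1 - min (b ^ 2) 2⁻¹ * Real.sin θ ^ 2)
        < 4 * Real.sqrt (1 - 2 * a ^ 2) / Real.sqrt (1 - min (a ^ 2) 2⁻¹ * Real.sin θ ^ 2) := by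
      rw [div_lt_div_iff₀ dbp dap]
      nlinarith
    simp only [hfa, hfb, mul_one_div] at this ⊢
    linarith
  have hint : 0 < ∫ θ in (0:ℝ)..(Real.pi / 2), (fa θ - fb θ) := by
    apply intervalIntegral.intervalIntegral_pos_of_pos
    · exact ((hca.sub hcb).intervalIntegrable 0 (Real.pi / 2))
    · exact hpos
    · positivity
  rw [intervalIntegral.integral_sub (hca.intervalIntegrable _ _) (hcb.intervalIntegrable _ _)] at hint
  linarith
/-- For the planar Hamiltonian flow of
`F(x₁,x₂) = x₁²/2 + x₁⁴/4 + x₂²/2`, the period of the closed orbit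
`q^k(t) = (A cn(λt,k), -Aλ sn dn)` (with `A² = 2k²/(1-2k²)`,
`λ = 1/√(1-2k²)`) of energy `h > 0` is `T(h) = 4K(k)√(1-2k²)`, where
`k = κ(h) ∈ (0,1/√2)` is determined by `h = k²(1-k²)/(1-2k²)²`; moreover
`T` is a strictly decreasing continuous function of `h` on `(0,∞)` with
`T(h) → 2π` as `h → 0⁺`. -/
theorem duffing_period_function
    (K : ℝ → ℝ)
    (hK : ∀ k, K k = ∫ θ in (0:ℝ)..(Real.pi / 2),
      1 / Real.sqrt (1 - k ^ 2 * Real.sin θ ^ 2))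
    -- the modulus κ(h) determined by the energy-period relation
    (κ : ℝ → ℝ)
    (hκ : ∀ h > 0, 0 < κ h ∧ (κ h) ^ 2 < 1 / 2 ∧
      h = (κ h) ^ 2 * (1 - (κ h) ^ 2) / (1 - 2 * (κ h) ^ 2) ^ 2)
    (T : ℝ → ℝ)
    (hT : ∀ h, T h = 4 * K (κ h) * Real.sqrt (1 - 2 * (κ h) ^ 2))
    -- the Jacobi elliptic functions (modulus as first argument)
    (sn cn dn : ℝ → ℝ → ℝ)
    (hcnper : ∀ k u, cn k (u + 4 * K k) = cn k u)
    (hsnper : ∀ k u, sn k (u + 4 * K k) = sn k u)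
    (hdnper : ∀ k u, dn k (u + 2 * K k) = dn k u)
    -- the closed orbit of energy h
    (q : ℝ → ℝ → ℝ × ℝ)
    (hq : ∀ h t, q h t =
      (Real.sqrt (2 * (κ h) ^ 2 / (1 - 2 * (κ h) ^ 2)) * cn (κ h) (t / Real.sqrt (1 - 2 * (κ h) ^ 2)),
       -(Real.sqrt (2 * (κ h) ^ 2 / (1 - 2 * (κ h) ^ 2)) / Real.sqrt (1 - 2 * (κ h) ^ 2)) *
         sn (κ h) (t / Real.sqrt (1 - 2 * (κ h) ^ 2)) * dn (κ h) (t / Real.sqrt (1 - 2 * (κ h) ^ 2)))) :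
    -- T(h) is a period of the orbit of energy h
    (∀ h > 0, ∀ t, q h (t + T h) = q h t) ∧
    StrictAntiOn T (Set.Ioi 0) ∧
    ContinuousOn T (Set.Ioi 0) ∧
    Tendsto T (nhdsWithin 0 (Set.Ioi 0)) (nhds (2 * Real.pi)) := by
  -- `K` agrees with `duffingG` whenever the modulus squared is at most `1/2`
  have hKG : ∀ k : ℝ, k ^ 2 ≤ 1 / 2 → K k = duffingG k := by
    intro k hk
    rw [hK, duffingG, min_eq_left (by linarith : k ^ 2 ≤ 2⁻¹)]
  -- express `T` via `duffingG`
  have hTG : ∀ h > 0, T h = 4 * duffingG (κ h) * Real.sqrt (1 - 2 * (κ h) ^ 2) := by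
    intro h hh
    rw [hT, hKG _ (hκ h hh).2.1.le]
  -- strict monotonicity of `κ`
  have κmono : StrictMonoOn κ (Set.Ioi 0) := by
    intro h1 hm1 h2 hm2 h12
    obtain ⟨p1, s1, e1⟩ := hκ h1 hm1
    obtain ⟨p2, s2, e2⟩ := hκ h2 hm2
    by_contra hle
    push_neg at hle
    rcases lt_or_eq_of_le hle with hlt | heq
    · have := duffing_fmono p2.le hlt s1
      rw [← e1, ← e2] at this
      exact absurd h12 (not_lt.2 this.le)
    · rw [heq] at e2
      rw [← e1] at e2
      exact absurd e2 h12.ne'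
  -- `κ` maps `(0,∞)` into `(0, √(1/2))`
  have κmaps : ∀ h > 0, κ h ∈ Set.Ioo (0:ℝ) (Real.sqrt (1/2)) := by
    intro h hh
    obtain ⟨p, s, _⟩ := hκ h hh
    exact ⟨p, (Real.lt_sqrt p.le).2 s⟩
  -- `κ` is surjective onto `(0, √(1/2))`
  have κsurj : ∀ k ∈ Set.Ioo (0:ℝ) (Real.sqrt (1/2)), ∃ h ∈ Set.Ioi (0:ℝ), κ h = k := by
    intro k hk
    obtain ⟨hk0, hk1⟩ := hk
    have hk2 : k ^ 2 < 1 / 2 := (Real.lt_sqrt hk0.le).1 hk1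
    set hv := k ^ 2 * (1 - k ^ 2) / (1 - 2 * k ^ 2) ^ 2 with hhv
    have hvpos : 0 < hv := by
      apply div_pos (mul_pos (by positivity) (by nlinarith))
      nlinarith
    obtain ⟨p, s, e⟩ := hκ hv hvpos
    refine ⟨hv, hvpos, ?_⟩
    rcases lt_trichotomy (κ hv) k with hlt | heq | hgt
    · have := duffing_fmono p.le hlt hk2
      rw [← e] at this; exact absurd this (lt_irrefl _)
    · exact heq
    · have := duffing_fmono hk0.le hgt s
      rw [← e] at this; exact absurd this (lt_irrefl _)
  -- continuity of `κ`
  have κcont : ContinuousOn κ (Set.Ioi 0) := by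
    intro h hh
    refine (κmono.continuousAt_of_image_mem_nhds (isOpen_Ioi.mem_nhds hh) ?_).continuousWithinAt
    refine Filter.mem_of_superset (isOpen_Ioo.mem_nhds (κmaps h hh)) ?_
    intro k hk
    obtain ⟨h', hh', hk'⟩ := κsurj k hk
    exact ⟨h', hh', hk'⟩
  -- the smooth period function
  set g : ℝ → ℝ := fun k => 4 * duffingG k * Real.sqrt (1 - 2 * k ^ 2) with hg
  have gcont : Continuous g := by
    apply Continuous.mul (continuous_const.mul duffingG_cont)
    exact Real.continuous_sqrt.comp (by fun_prop)
  -- periodicity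
  refine ⟨?_, ?_, ?_, ?_⟩
  · intro h hh t
    obtain ⟨p, s, _⟩ := hκ h hh
    have hL : 0 < Real.sqrt (1 - 2 * (κ h) ^ 2) := Real.sqrt_pos.2 (by nlinarith)
    have harg : (t + T h) / Real.sqrt (1 - 2 * (κ h) ^ 2)
        = t / Real.sqrt (1 - 2 * (κ h) ^ 2) + 4 * K (κ h) := by
      rw [hT]; field_simp
    have hdn4 : ∀ u, dn (κ h) (u + 4 * K (κ h)) = dn (κ h) u := by
      intro u
      have : u + 4 * K (κ h) = u + 2 * K (κ h) + 2 * K (κ h) := by ring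
      rw [this, hdnper, hdnper]
    rw [hq, hq, harg, hcnper, hsnper, hdn4]
  · intro h1 hm1 h2 hm2 h12
    rw [hTG h1 hm1, hTG h2 hm2]
    exact duffing_gmono (κmaps h1 hm1).1.le (κmono hm1 hm2 h12) (hκ h2 hm2).2.1
  · have : ContinuousOn (fun h => g (κ h)) (Set.Ioi 0) := gcont.comp_continuousOn κcont
    exact this.congr fun h hh => hTG h hh
  · have κ0 : Tendsto κ (nhdsWithin 0 (Set.Ioi 0)) (nhds 0) := by
      rw [tendsto_order]
      constructor
      · intro a ha
        filter_upwards [self_mem_nhdsWithin] with h hh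
        exact lt_trans ha (hκ h hh).1
      · intro b hb
        set c := min b (1/2) with hc
        have hc0 : 0 < c := lt_min hb (by norm_num)
        have hc2 : c ^ 2 < 1 / 2 := by
          have : c ≤ 1/2 := min_le_right _ _
          nlinarith
        set hv := c ^ 2 * (1 - c ^ 2) / (1 - 2 * c ^ 2) ^ 2 with hhv
        have hvpos : 0 < hv := by
          apply div_pos (mul_pos (by positivity) (by nlinarith))
          nlinarith
        have : Set.Ioo (0:ℝ) hv ∈ nhdsWithin 0 (Set.Ioi 0) :=
          Ioo_mem_nhdsGT_of_mem ⟨le_refl _, hvpos⟩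
        filter_upwards [this] with h hh
        obtain ⟨hh1, hh2⟩ := hh
        obtain ⟨p, s, e⟩ := hκ h hh1
        have hlt : κ h < c := by
          by_contra hge
          push_neg at hge
          rw [hhv] at hh2
          rcases lt_or_eq_of_le hge with hgt | heq
          · have := duffing_fmono hc0.le hgt s
            rw [← e] at this
            linarith
          · rw [← heq] at e
            linarith
        exact lt_of_lt_of_le hlt (min_le_left _ _)
    have gl : Tendsto (fun h => g (κ h)) (nhdsWithin 0 (Set.Ioi 0)) (nhds (g 0)) :=
      (gcont.tendsto 0).comp κ0
    have g0 : g 0 = 2 * Real.pi := by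
      simp only [hg, duffingG_zero]
      norm_num
      ring
    rw [← g0]
    refine gl.congr' ?_
    filter_upwards [self_mem_nhdsWithin] with h hh
    exact (hTG h hh).symm
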